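/- The coarse entropy of any metric space X is either zero or infinity: h_∞(X) ∈ {0, ∞}. -/

import Mathlib

open Filter Set Metric
open scoped ENNReal

noncomputable section

/-- `p` represents a `δ`-pseudoorbit of `f` of length `n` starting at `x₀`:
`(p 0, p 1, …, p n)` with `p 0 = x₀` and `dist (f (p i)) (p (i+1)) ≤ δ` for `i < n`.
(Only the values `p 0, …, p n` are relevant.) -/
def IsPseudoOrbit {X : Type*} [MetricSpace X] (f : X → X) (δ : ℝ) (n : ℕ) (x₀ : X)
    (p : ℕ → X) : Prop :=
  p 0 = x₀ ∧ ∀ i < n, dist (f (p i)) (p (i + 1)) ≤ δ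

/-- The distance between two pseudoorbits of length `n`:
the maximum of `dist (p i) (q i)` over `0 ≤ i ≤ n`. -/
def orbitDist {X : Type*} [MetricSpace X] (n : ℕ) (p q : ℕ → X) : ℝ :=
  (Finset.range (n + 1)).sup' (by simp) fun i => dist (p i) (q i)

/-- A family `S` of pseudoorbits of length `n` is `R`-separated if any two distinct
members are at pseudoorbit distance at least `R`. -/
def IsSepFamily {X : Type*} [MetricSpace X] (n : ℕ) (R : ℝ) (S : Set (ℕ → X)) : Prop :=
  ∀ p ∈ S, ∀ q ∈ S, p ≠ q → R ≤ orbitDist n p q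

/-- `sepCard f n R δ x₀` is `s(f,n,R,δ,x₀)`: the supremum of cardinalities of
`R`-separated sets of `δ`-pseudoorbits of `f` of length `n` starting at `x₀`. -/
def sepCard {X : Type*} [MetricSpace X] (f : X → X) (n : ℕ) (R δ : ℝ) (x₀ : X) : ℝ≥0∞ :=
  ⨆ (S : Set (ℕ → X)) (_ : ∀ p ∈ S, IsPseudoOrbit f δ n x₀ p) (_ : IsSepFamily n R S),
    (S.encard : ℝ≥0∞)

/-- Extended logarithm `[0,∞] → [0,∞]` (negative values are truncated to `0`). -/
def elog (x : ℝ≥0∞) : ℝ≥0∞ :=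
  if x = ⊤ then ⊤ else ENNReal.ofReal (Real.log x.toReal)

/-- The coarse entropy of `f : X → X` computed at the basepoint `x₀`:
`h_∞(f) = lim_{δ→∞} lim_{R→∞} limsup_{n→∞} (1/n) log s(f,n,R,δ,x₀)`.
Since `s` is nondecreasing in `δ` and nonincreasing in `R`, the limits in `δ` and `R`
are the supremum over `δ > 0` and the infimum over `R > 0`, respectively. -/
def coarseEntropyAt {X : Type*} [MetricSpace X] (f : X → X) (x₀ : X) : ℝ≥0∞ :=
  ⨆ (δ : ℝ) (_ : 0 < δ), ⨅ (R : ℝ) (_ : 0 < R),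
    Filter.atTop.limsup fun n : ℕ => elog (sepCard f n R δ x₀) / (n : ℝ≥0∞)

end

/-!
Keeping every other point of a `δ`-path of length `m` gives a `2δ`-path of length `m / 2`, and
two paths that are `(R + 2δ)`-separated stay `R`-separated, so
`s(m, R + 2δ, δ) ≤ s(m / 2, R, 2δ)`. Hence the entropy at scale `2δ` is at least twice the entropy
at scale `δ`, and their supremum `h` over all scales satisfies `2 h ≤ h`, i.e. `h ∈ {0, ∞}`.
-/

theorem elog_mono : Monotone elog := by
  intro x y hxy
  unfold elog
  by_cases hy : y = ⊤
  · simp [hy]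
  have hx : x ≠ ⊤ := ne_top_of_le_ne_top hy hxy
  rw [if_neg hx, if_neg hy]
  rcases le_or_gt x.toReal 1 with hx1 | hx1
  · simp [ENNReal.ofReal_eq_zero.mpr (Real.log_nonpos ENNReal.toReal_nonneg hx1)]
  · exact ENNReal.ofReal_le_ofReal
      (Real.log_le_log (one_pos.trans hx1) (ENNReal.toReal_mono hy hxy))

theorem two_mul_limsup_div_le {a c : ℕ → ℝ≥0∞} (h : ∀ m, a m ≤ c (m / 2)) :
    2 * limsup (fun m : ℕ => a m / m) atTop ≤ limsup (fun n : ℕ => c n / n) atTop := by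
  rw [← ENNReal.limsup_const_mul_of_ne_top ENNReal.ofNat_ne_top]
  calc limsup (fun m : ℕ => 2 * (a m / m)) atTop
      ≤ limsup ((fun n : ℕ => c n / n) ∘ (· / 2)) atTop := by
        refine limsup_le_limsup (Eventually.of_forall fun m => ?_)
        have hm : ((2 * (m / 2) : ℕ) : ℝ≥0∞) ≤ m := by exact_mod_cast Nat.mul_div_le m 2
        calc 2 * (a m / m) ≤ 2 * (c (m / 2) / ((2 * (m / 2) : ℕ) : ℝ≥0∞)) :=
              mul_le_mul_right (ENNReal.div_le_div (h m) hm) 2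
          _ = c (m / 2) / (m / 2 : ℕ) := by
              rw [Nat.cast_mul, Nat.cast_ofNat, ← mul_div_assoc,
                ENNReal.mul_div_mul_left _ _ two_ne_zero ENNReal.ofNat_ne_top]
    _ ≤ limsup (fun n : ℕ => c n / n) atTop :=
        (Nat.tendsto_div_const_atTop two_ne_zero).limsup_comp_le_limsup

theorem ENNReal.eq_zero_or_eq_top_of_two_mul_le {a : ℝ≥0∞} (h : 2 * a ≤ a) : a = 0 ∨ a = ⊤ := by
  refine or_iff_not_imp_right.2 fun ha => nonpos_iff_eq_zero.1 ?_
  refine ENNReal.le_of_add_le_add_left ha ?_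
  rwa [add_zero, ← two_mul]

section General

variable {X : Type*} [MetricSpace X]

theorem orbitDist_self (n : ℕ) (p : ℕ → X) : orbitDist n p p = 0 := by
  simp [orbitDist]

theorem le_orbitDist_iff {n : ℕ} {p q : ℕ → X} {r : ℝ} :
    r ≤ orbitDist n p q ↔ ∃ i ≤ n, r ≤ dist (p i) (q i) := by
  simp [orbitDist, Finset.le_sup'_iff]

theorem sepCard_le_of_map {f g : X → X} {n m : ℕ} {R R' δ δ' : ℝ} {x₀ : X}
    (hR' : 0 < R') (F : (ℕ → X) → (ℕ → X))
    (hF : ∀ p, IsPseudoOrbit f δ n x₀ p → IsPseudoOrbit g δ' m x₀ (F p))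
    (hsep : ∀ p q, IsPseudoOrbit f δ n x₀ p → IsPseudoOrbit f δ n x₀ q →
      R ≤ orbitDist n p q → R' ≤ orbitDist m (F p) (F q)) :
    sepCard f n R δ x₀ ≤ sepCard g m R' δ' x₀ := by
  refine iSup₂_le fun S hS => iSup_le fun hSsep => ?_
  have hinj : InjOn F S := by
    intro p hp q hq hpq
    by_contra hne
    have := hsep p q (hS p hp) (hS q hq) (hSsep p hp q hq hne)
    rw [hpq, orbitDist_self] at this
    linarith
  have hFS : ∀ p ∈ F '' S, IsPseudoOrbit g δ' m x₀ p := by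
    rintro _ ⟨p, hp, rfl⟩
    exact hF p (hS p hp)
  have hFSsep : IsSepFamily m R' (F '' S) := by
    rintro _ ⟨p, hp, rfl⟩ _ ⟨q, hq, rfl⟩ hne
    exact hsep p q (hS p hp) (hS q hq) (hSsep p hp q hq (ne_of_apply_ne F hne))
  rw [← hinj.encard_image]
  exact le_iSup₂_of_le (f := fun T (_ : ∀ p ∈ T, IsPseudoOrbit g δ' m x₀ p) =>
    ⨆ (_ : IsSepFamily m R' T), (T.encard : ℝ≥0∞)) (F '' S) hFS (le_iSup_of_le hFSsep le_rfl)

noncomputable def coarseEntropyAtScale (f : X → X) (x₀ : X) (δ : ℝ) : ℝ≥0∞ :=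
  ⨅ (R : ℝ) (_ : 0 < R), limsup (fun n : ℕ => elog (sepCard f n R δ x₀) / (n : ℝ≥0∞)) atTop

theorem coarseEntropyAt_eq_iSup_coarseEntropyAtScale (f : X → X) (x₀ : X) :
    coarseEntropyAt f x₀ = ⨆ (δ : ℝ) (_ : 0 < δ), coarseEntropyAtScale f x₀ δ :=
  rfl

end General

section Identity

variable {X : Type*} [MetricSpace X] {δ : ℝ} {m : ℕ} {x₀ : X} {p : ℕ → X}

theorem IsPseudoOrbit.dist_le_two_mul (hp : IsPseudoOrbit id δ m x₀ p) {i : ℕ}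
    (hi : i + 2 ≤ m) : dist (p i) (p (i + 2)) ≤ 2 * δ := by
  have h₁ := hp.2 i (by omega)
  have h₂ := hp.2 (i + 1) (by omega)
  rw [id] at h₁ h₂
  linarith [dist_triangle (p i) (p (i + 1)) (p (i + 2))]

theorem IsPseudoOrbit.dist_even_le (hp : IsPseudoOrbit id δ m x₀ p) (hδ : 0 ≤ δ) {j : ℕ}
    (hj : j ≤ m) : dist (p j) (p (2 * (j / 2))) ≤ δ := by
  rcases Nat.even_or_odd' j with ⟨i, rfl | rfl⟩
  · simpa using hδ
  · have := hp.2 (2 * i) (by omega)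
    rw [show (2 * i + 1) / 2 = i by omega]
    rwa [id, dist_comm] at this

theorem sepCard_id_le_sepCard_half {R : ℝ} (hR : 0 < R) (hδ : 0 ≤ δ) (m : ℕ) :
    sepCard id m (R + 2 * δ) δ x₀ ≤ sepCard id (m / 2) R (2 * δ) x₀ := by
  refine sepCard_le_of_map hR (fun p i => p (2 * i)) ?_ ?_
  · intro p hp
    refine ⟨by simpa using hp.1, fun i hi => ?_⟩
    simpa [Nat.mul_succ] using hp.dist_le_two_mul (i := 2 * i) (by omega)
  · intro p q hp hq hpq
    obtain ⟨j, hj, hRj⟩ := le_orbitDist_iff.1 hpq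
    refine le_orbitDist_iff.2 ⟨j / 2, Nat.div_le_div_right hj, ?_⟩
    have hpj := hp.dist_even_le hδ hj
    have hqj := hq.dist_even_le hδ hj
    linarith [dist_triangle4 (p j) (p (2 * (j / 2))) (q (2 * (j / 2))) (q j),
      dist_comm (q j) (q (2 * (j / 2)))]

theorem two_mul_coarseEntropyAtScale_id_le (hδ : 0 ≤ δ) :
    2 * coarseEntropyAtScale id x₀ δ ≤ coarseEntropyAtScale id x₀ (2 * δ) := by
  refine le_iInf₂ fun R hR => ?_
  calc 2 * coarseEntropyAtScale id x₀ δ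
      ≤ 2 * limsup (fun m : ℕ => elog (sepCard id m (R + 2 * δ) δ x₀) / m) atTop :=
        mul_le_mul_right (iInf₂_le (R + 2 * δ) (by linarith)) 2
    _ ≤ _ := two_mul_limsup_div_le fun m => elog_mono (sepCard_id_le_sepCard_half hR hδ m)

end Identity

/-- The coarse entropy of any metric space is either zero or infinity. -/
theorem coarseEntropy_zero_or_top {X : Type*} [MetricSpace X] (x₀ : X) :
    coarseEntropyAt (id : X → X) x₀ = 0 ∨ coarseEntropyAt (id : X → X) x₀ = ⊤ := by
  refine ENNReal.eq_zero_or_eq_top_of_two_mul_le ?_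
  rw [coarseEntropyAt_eq_iSup_coarseEntropyAtScale, ENNReal.mul_iSup]
  refine iSup_le fun δ => ?_
  rw [ENNReal.mul_iSup]
  refine iSup_le fun hδ => (two_mul_coarseEntropyAtScale_id_le hδ.le).trans ?_
  exact le_iSup₂ (f := fun δ (_ : 0 < δ) => coarseEntropyAtScale id x₀ δ) (2 * δ) (by positivity)
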